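/- If γ ∈ ρ^{ND}_μ(A) and J ⊆ ρ^{ND}_μ(A) is an interval containing γ, then U_η = U_γ and V_η = V_γ for all η ∈ J. -/

import Mathlib

open Filter Topology

noncomputable section

/-- Bounded linear operators on ℝⁿ. -/
abbrev Op (n : ℕ) := EuclideanSpace ℝ (Fin n) →L[ℝ] EuclideanSpace ℝ (Fin n)

/-- μ is a growth rate: strictly increasing, positive, μ(0)=1, μ→∞ at +∞, μ→0 at -∞. -/
def GrowthRate (μ : ℝ → ℝ) : Prop :=
  StrictMono μ ∧ (∀ t, 0 < μ t) ∧ μ 0 = 1 ∧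
    Tendsto μ atTop atTop ∧ Tendsto μ atBot (nhds 0)

/-- The evolution operator Ψ admits a nonuniform μ-dichotomy with invariant projections P
and constants K, α, β, θ, ν. -/
def NuDWith {n : ℕ} (μ : ℝ → ℝ) (Ψ : ℝ → ℝ → Op n) (P : ℝ → Op n)
    (K α β θ ν : ℝ) : Prop :=
  (∀ t, P t ∘L P t = P t) ∧
  (∀ t s, P t ∘L Ψ t s = Ψ t s ∘L P s) ∧
  1 ≤ K ∧ α < 0 ∧ 0 < β ∧ 0 ≤ θ ∧ 0 ≤ ν ∧ α + θ < 0 ∧ 0 < β - ν ∧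
  (∀ t s, s ≤ t → ‖Ψ t s ∘L P s‖ ≤ K * (μ t / μ s) ^ α * μ s ^ (Real.sign s * θ)) ∧
  (∀ t s, t ≤ s → ‖Ψ t s ∘L (1 - P s)‖ ≤ K * (μ t / μ s) ^ β * μ s ^ (Real.sign s * ν))

/-- The evolution operator Ψ admits a nonuniform μ-dichotomy. -/
def NuD {n : ℕ} (μ : ℝ → ℝ) (Ψ : ℝ → ℝ → Op n) : Prop :=
  ∃ P K α β θ ν, NuDWith μ Ψ P K α β θ ν

/-- The evolution operator Φ_γ(t,s) = (μ(t)/μ(s))^{-γ} Φ(t,s) of the shifted system. -/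
def shiftEvo {n : ℕ} (μ : ℝ → ℝ) (γ : ℝ) (Φ : ℝ → ℝ → Op n) : ℝ → ℝ → Op n :=
  fun t s => (μ t / μ s) ^ (-γ) • Φ t s

/-- The nonuniform μ-resolvent set. -/
def resolventND {n : ℕ} (μ : ℝ → ℝ) (Φ : ℝ → ℝ → Op n) : Set ℝ :=
  {γ | NuD μ (shiftEvo μ γ Φ)}

/-- The nonuniform μ-dichotomy spectrum. -/
def spectrumND {n : ℕ} (μ : ℝ → ℝ) (Φ : ℝ → ℝ → Op n) : Set ℝ :=
  (resolventND μ Φ)ᶜ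

/-- Φ is the evolution operator of x' = A(t)x. -/
def IsEvolutionOp {n : ℕ} (A : ℝ → Op n) (Φ : ℝ → ℝ → Op n) : Prop :=
  (∀ s, Φ s s = 1) ∧ (∀ t τ s, Φ t τ ∘L Φ τ s = Φ t s) ∧
    (∀ s t, HasDerivAt (fun r => Φ r s) (A t ∘L Φ t s) t)

/-- U_γ = {(s,ξ) : sup_{t ≥ 0} ‖Φ(t,s)ξ‖ μ(t)^{-γ} < ∞}. -/
def Uset {n : ℕ} (μ : ℝ → ℝ) (Φ : ℝ → ℝ → Op n) (γ : ℝ) : Set (ℝ × EuclideanSpace ℝ (Fin n)) :=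
  {p | ∃ C, ∀ t, 0 ≤ t → ‖Φ t p.1 p.2‖ * μ t ^ (-γ) ≤ C}

/-- V_γ = {(s,ξ) : sup_{t ≤ 0} ‖Φ(t,s)ξ‖ μ(t)^{-γ} < ∞}. -/
def Vset {n : ℕ} (μ : ℝ → ℝ) (Φ : ℝ → ℝ → Op n) (γ : ℝ) : Set (ℝ × EuclideanSpace ℝ (Fin n)) :=
  {p | ∃ C, ∀ t, t ≤ 0 → ‖Φ t p.1 p.2‖ * μ t ^ (-γ) ≤ C}

/-! Suppose the system shifted by `ζ` has a nonuniform `μ`-dichotomy with projections `P` and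
exponents `α, β, θ, ν`. Shifting further by any `δ` in the gap `(α + θ, β - ν)` leaves a dichotomy
with the same projections, and for a dichotomy at level `0` boundedness of a solution is read off
from its initial value: the component in `ker P` grows at least like `μ t ^ (β - ν)` as `t → ∞`,
the component in `range P` at least like `μ t ^ (α + θ)` as `t → -∞`, while the other component
stays bounded. Hence `U_{ζ+δ} = {P ξ = ξ}` and `V_{ζ+δ} = {P ξ = 0}` for all such `δ`, so `U` and
`V` are locally constant on the resolvent set and therefore constant on each interval in it. -/

def IsCocycle {n : ℕ} (Ψ : ℝ → ℝ → Op n) : Prop :=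
  (∀ s, Ψ s s = 1) ∧ ∀ t τ s, Ψ t τ ∘L Ψ τ s = Ψ t s

lemma IsEvolutionOp.isCocycle {n : ℕ} {A : ℝ → Op n} {Φ : ℝ → ℝ → Op n}
    (hΦ : IsEvolutionOp A Φ) : IsCocycle Φ :=
  ⟨hΦ.1, hΦ.2.1⟩

namespace IsCocycle

variable {n : ℕ} {Ψ : ℝ → ℝ → Op n}

lemma apply_apply (hΨ : IsCocycle Ψ) (t τ s : ℝ) (x : EuclideanSpace ℝ (Fin n)) :
    Ψ t τ (Ψ τ s x) = Ψ t s x := by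
  rw [← hΨ.2 t τ s, ContinuousLinearMap.comp_apply]

lemma apply_apply_self (hΨ : IsCocycle Ψ) (t s : ℝ) (x : EuclideanSpace ℝ (Fin n)) :
    Ψ s t (Ψ t s x) = x := by
  rw [hΨ.apply_apply, hΨ.1, one_apply_eq_self]

lemma injective (hΨ : IsCocycle Ψ) (t s : ℝ) : Function.Injective (Ψ t s) :=
  Function.LeftInverse.injective (hΨ.apply_apply_self t s)

lemma shiftEvo {μ : ℝ → ℝ} (hΨ : IsCocycle Ψ) (hμ : ∀ t, 0 < μ t) (γ : ℝ) :
    IsCocycle (shiftEvo μ γ Ψ) := by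
  refine ⟨fun s => ?_, fun t τ s => ?_⟩
  · simp [_root_.shiftEvo, div_self (hμ s).ne', hΨ.1 s]
  · have hquot : μ t / μ τ * (μ τ / μ s) = μ t / μ s := by
      field_simp [(hμ τ).ne']
    simp only [_root_.shiftEvo, ContinuousLinearMap.comp_smul, ContinuousLinearMap.smul_comp,
      smul_smul, hΨ.2 t τ s]
    rw [mul_comm, ← Real.mul_rpow (div_pos (hμ t) (hμ τ)).le (div_pos (hμ τ) (hμ s)).le, hquot]

end IsCocycle

namespace GrowthRate

variable {μ : ℝ → ℝ}

lemma pos (hμ : GrowthRate μ) (t : ℝ) : 0 < μ t := hμ.2.1 t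

lemma one_le (hμ : GrowthRate μ) {t : ℝ} (ht : 0 ≤ t) : 1 ≤ μ t :=
  hμ.2.2.1 ▸ hμ.1.monotone ht

lemma le_one (hμ : GrowthRate μ) {t : ℝ} (ht : t ≤ 0) : μ t ≤ 1 :=
  hμ.2.2.1 ▸ hμ.1.monotone ht

lemma tendsto_rpow_atTop (hμ : GrowthRate μ) {p : ℝ} (hp : 0 < p) :
    Tendsto (fun t => μ t ^ (-p)) atTop (𝓝 0) :=
  (tendsto_rpow_neg_atTop hp).comp hμ.2.2.2.1

lemma tendsto_rpow_atBot (hμ : GrowthRate μ) {p : ℝ} (hp : 0 < p) :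
    Tendsto (fun t => μ t ^ p) atBot (𝓝 0) := by
  have h := (Real.continuousAt_rpow_const 0 p (Or.inr hp.le)).tendsto.comp hμ.2.2.2.2
  rwa [Real.zero_rpow hp.ne'] at h

end GrowthRate

lemma abs_sign_mul_le (r : ℝ) {a : ℝ} (ha : 0 ≤ a) : |Real.sign r * a| ≤ a := by
  rcases Real.sign_apply_eq r with h | h | h <;> simp [h, abs_of_nonneg ha, ha]

lemma eq_zero_of_norm_le_of_tendsto {E : Type*} [NormedAddCommGroup E] {l : Filter ℝ} [l.NeBot]
    {f : ℝ → ℝ} (hf : Tendsto f l (𝓝 0)) {w : E} {c : ℝ} (hw : ∀ᶠ t in l, ‖w‖ ≤ f t * c) :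
    w = 0 :=
  norm_le_zero_iff.1 (ge_of_tendsto (by simpa using hf.mul_const c) hw)

section Shift

variable {n : ℕ} {μ : ℝ → ℝ}

lemma NuDWith.shiftEvo {Ψ : ℝ → ℝ → Op n} {P : ℝ → Op n} {K α β θ ν δ : ℝ}
    (h : NuDWith μ Ψ P K α β θ ν) (hμ : ∀ t, 0 < μ t) (hαδ : α + θ < δ) (hδβ : δ < β - ν) :
    NuDWith μ (shiftEvo μ δ Ψ) P K (α - δ) (β - δ) θ ν := by
  obtain ⟨hP, hPΨ, hK, -, -, hθ, hν, -, -, hstable, hunstable⟩ := h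
  have hscale_nonneg : ∀ t s, 0 ≤ (μ t / μ s) ^ (-δ) :=
    fun t s => Real.rpow_nonneg (div_pos (hμ t) (hμ s)).le _
  have hnorm : ∀ t s (Q : Op n),
      ‖_root_.shiftEvo μ δ Ψ t s ∘L Q‖ = (μ t / μ s) ^ (-δ) * ‖Ψ t s ∘L Q‖ := fun t s Q => by
    rw [_root_.shiftEvo, ContinuousLinearMap.smul_comp, norm_smul,
      Real.norm_of_nonneg (hscale_nonneg t s)]
  have hrpow : ∀ t s γ, (μ t / μ s) ^ (-δ) * (μ t / μ s) ^ γ = (μ t / μ s) ^ (γ - δ) :=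
    fun t s γ => by rw [← Real.rpow_add (div_pos (hμ t) (hμ s)), neg_add_eq_sub]
  refine ⟨hP, fun t s => ?_, hK, by linarith, by linarith, hθ, hν, by linarith, by linarith,
    fun t s hst => ?_, fun t s hts => ?_⟩
  · simp only [_root_.shiftEvo, ContinuousLinearMap.comp_smul, ContinuousLinearMap.smul_comp,
      hPΨ t s]
  · have := mul_le_mul_of_nonneg_left (hstable t s hst) (hscale_nonneg t s)
    rw [hnorm, ← hrpow]
    linarith
  · have := mul_le_mul_of_nonneg_left (hunstable t s hts) (hscale_nonneg t s)
    rw [hnorm, ← hrpow]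
    linarith

variable {Φ : ℝ → ℝ → Op n}

lemma norm_shiftEvo_apply_mul_rpow (hμ : ∀ t, 0 < μ t) (ζ δ t s : ℝ)
    (ξ : EuclideanSpace ℝ (Fin n)) :
    ‖shiftEvo μ ζ Φ t s ξ‖ * μ t ^ (-δ) = μ s ^ ζ * (‖Φ t s ξ‖ * μ t ^ (-(ζ + δ))) := by
  rw [shiftEvo, smul_apply, norm_smul,
    Real.norm_of_nonneg (Real.rpow_nonneg (div_pos (hμ t) (hμ s)).le _),
    Real.div_rpow (hμ t).le (hμ s).le, Real.rpow_neg (hμ s).le, div_inv_eq_mul, neg_add,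
    Real.rpow_add (hμ t)]
  ring

lemma exists_bound_shiftEvo_iff (hμ : ∀ t, 0 < μ t) (ζ δ s : ℝ) (ξ : EuclideanSpace ℝ (Fin n))
    (S : ℝ → Prop) :
    (∃ C, ∀ t, S t → ‖shiftEvo μ ζ Φ t s ξ‖ * μ t ^ (-δ) ≤ C) ↔
      ∃ C, ∀ t, S t → ‖Φ t s ξ‖ * μ t ^ (-(ζ + δ)) ≤ C := by
  have hc : 0 < μ s ^ ζ := Real.rpow_pos_of_pos (hμ s) ζ
  simp only [norm_shiftEvo_apply_mul_rpow hμ]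
  constructor
  · rintro ⟨C, hC⟩
    exact ⟨C / μ s ^ ζ, fun t ht => (le_div_iff₀' hc).2 (hC t ht)⟩
  · rintro ⟨C, hC⟩
    exact ⟨μ s ^ ζ * C, fun t ht => mul_le_mul_of_nonneg_left (hC t ht) hc.le⟩

lemma uset_shiftEvo (hμ : ∀ t, 0 < μ t) (ζ δ : ℝ) :
    Uset μ (shiftEvo μ ζ Φ) δ = Uset μ Φ (ζ + δ) :=
  Set.ext fun p => exists_bound_shiftEvo_iff hμ ζ δ p.1 p.2 (0 ≤ ·)

lemma vset_shiftEvo (hμ : ∀ t, 0 < μ t) (ζ δ : ℝ) :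
    Vset μ (shiftEvo μ ζ Φ) δ = Vset μ Φ (ζ + δ) :=
  Set.ext fun p => exists_bound_shiftEvo_iff hμ ζ δ p.1 p.2 (· ≤ 0)

end Shift

namespace NuDWith

variable {n : ℕ} {μ : ℝ → ℝ} {Ψ : ℝ → ℝ → Op n} {P : ℝ → Op n} {K α β θ ν : ℝ}

lemma proj_apply_proj (h : NuDWith μ Ψ P K α β θ ν) (t : ℝ) (x : EuclideanSpace ℝ (Fin n)) :
    P t (P t x) = P t x := by
  rw [← ContinuousLinearMap.comp_apply, h.1 t]

lemma proj_apply_evo (h : NuDWith μ Ψ P K α β θ ν) (t s : ℝ) (x : EuclideanSpace ℝ (Fin n)) :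
    P t (Ψ t s x) = Ψ t s (P s x) := by
  rw [← ContinuousLinearMap.comp_apply, h.2.1 t s, ContinuousLinearMap.comp_apply]

lemma const_nonneg (h : NuDWith μ Ψ P K α β θ ν) : 0 ≤ K :=
  zero_le_one.trans h.2.2.1

lemma norm_apply_proj_le (h : NuDWith μ Ψ P K α β θ ν) {t s : ℝ} (hst : s ≤ t)
    (x : EuclideanSpace ℝ (Fin n)) :
    ‖Ψ t s (P s x)‖ ≤ K * (μ t / μ s) ^ α * μ s ^ (Real.sign s * θ) * ‖x‖ :=
  (Ψ t s ∘L P s).le_of_opNorm_le (h.2.2.2.2.2.2.2.2.2.1 t s hst) x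

lemma norm_apply_sub_proj_le (h : NuDWith μ Ψ P K α β θ ν) {t s : ℝ} (hts : t ≤ s)
    (x : EuclideanSpace ℝ (Fin n)) :
    ‖Ψ t s (x - P s x)‖ ≤ K * (μ t / μ s) ^ β * μ s ^ (Real.sign s * ν) * ‖x‖ :=
  (Ψ t s ∘L (1 - P s)).le_of_opNorm_le (h.2.2.2.2.2.2.2.2.2.2 t s hts) x

lemma norm_apply_proj_le_of_nonneg (h : NuDWith μ Ψ P K α β θ ν) (hμ : GrowthRate μ) {t : ℝ}
    (ht : 0 ≤ t) (x : EuclideanSpace ℝ (Fin n)) : ‖Ψ t 0 (P 0 x)‖ ≤ K * ‖x‖ := by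
  obtain ⟨-, -, -, hα, -⟩ := id h
  have hK := h.const_nonneg
  calc ‖Ψ t 0 (P 0 x)‖ ≤ K * (μ t / μ 0) ^ α * μ 0 ^ (Real.sign 0 * θ) * ‖x‖ :=
        h.norm_apply_proj_le ht x
    _ = K * μ t ^ α * ‖x‖ := by rw [hμ.2.2.1, div_one, Real.one_rpow, mul_one]
    _ ≤ K * 1 * ‖x‖ := by
        gcongr
        exact Real.rpow_le_one_of_one_le_of_nonpos (hμ.one_le ht) hα.le
    _ = K * ‖x‖ := by rw [mul_one]

lemma norm_apply_sub_proj_le_of_nonpos (h : NuDWith μ Ψ P K α β θ ν) (hμ : GrowthRate μ)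
    {t : ℝ} (ht : t ≤ 0) (x : EuclideanSpace ℝ (Fin n)) : ‖Ψ t 0 (x - P 0 x)‖ ≤ K * ‖x‖ := by
  obtain ⟨-, -, -, -, hβ, -⟩ := id h
  have hK := h.const_nonneg
  calc ‖Ψ t 0 (x - P 0 x)‖ ≤ K * (μ t / μ 0) ^ β * μ 0 ^ (Real.sign 0 * ν) * ‖x‖ :=
        h.norm_apply_sub_proj_le ht x
    _ = K * μ t ^ β * ‖x‖ := by rw [hμ.2.2.1, div_one, Real.one_rpow, mul_one]
    _ ≤ K * 1 * ‖x‖ := by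
        gcongr
        exact Real.rpow_le_one (hμ.pos t).le (hμ.le_one ht) hβ.le
    _ = K * ‖x‖ := by rw [mul_one]

lemma norm_le_of_proj_eq_zero (h : NuDWith μ Ψ P K α β θ ν) (hμ : GrowthRate μ)
    (hΨ : IsCocycle Ψ) {t : ℝ} (ht : 0 ≤ t) {w : EuclideanSpace ℝ (Fin n)} (hw : P 0 w = 0) :
    ‖w‖ ≤ K * μ t ^ (-(β - ν)) * ‖Ψ t 0 w‖ := by
  obtain ⟨-, -, -, -, -, -, hν, -⟩ := id h
  have hfix : Ψ t 0 w - P t (Ψ t 0 w) = Ψ t 0 w := by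
    rw [h.proj_apply_evo, hw, map_zero, sub_zero]
  have hexp : (μ 0 / μ t) ^ β * μ t ^ (Real.sign t * ν) ≤ μ t ^ (-(β - ν)) := by
    rw [hμ.2.2.1, one_div, Real.inv_rpow (hμ.pos t).le, ← Real.rpow_neg (hμ.pos t).le,
      ← Real.rpow_add (hμ.pos t)]
    exact Real.rpow_le_rpow_of_exponent_le (hμ.one_le ht)
      (by linarith [(abs_le.1 (abs_sign_mul_le t hν)).2])
  calc ‖w‖ = ‖Ψ 0 t (Ψ t 0 w - P t (Ψ t 0 w))‖ := by rw [hfix, hΨ.apply_apply_self]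
    _ ≤ K * (μ 0 / μ t) ^ β * μ t ^ (Real.sign t * ν) * ‖Ψ t 0 w‖ :=
        h.norm_apply_sub_proj_le ht _
    _ ≤ K * μ t ^ (-(β - ν)) * ‖Ψ t 0 w‖ := by
        rw [mul_assoc K]
        gcongr
        exact h.const_nonneg

lemma norm_le_of_proj_eq_self (h : NuDWith μ Ψ P K α β θ ν) (hμ : GrowthRate μ)
    (hΨ : IsCocycle Ψ) {t : ℝ} (ht : t ≤ 0) {u : EuclideanSpace ℝ (Fin n)} (hu : P 0 u = u) :
    ‖u‖ ≤ K * μ t ^ (-(α + θ)) * ‖Ψ t 0 u‖ := by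
  obtain ⟨-, -, -, -, -, hθ, -⟩ := id h
  have hfix : P t (Ψ t 0 u) = Ψ t 0 u := by rw [h.proj_apply_evo, hu]
  have hexp : (μ 0 / μ t) ^ α * μ t ^ (Real.sign t * θ) ≤ μ t ^ (-(α + θ)) := by
    rw [hμ.2.2.1, one_div, Real.inv_rpow (hμ.pos t).le, ← Real.rpow_neg (hμ.pos t).le,
      ← Real.rpow_add (hμ.pos t)]
    exact Real.rpow_le_rpow_of_exponent_ge (hμ.pos t) (hμ.le_one ht)
      (by linarith [(abs_le.1 (abs_sign_mul_le t hθ)).1])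
  calc ‖u‖ = ‖Ψ 0 t (P t (Ψ t 0 u))‖ := by rw [hfix, hΨ.apply_apply_self]
    _ ≤ K * (μ 0 / μ t) ^ α * μ t ^ (Real.sign t * θ) * ‖Ψ t 0 u‖ :=
        h.norm_apply_proj_le ht _
    _ ≤ K * μ t ^ (-(α + θ)) * ‖Ψ t 0 u‖ := by
        rw [mul_assoc K]
        gcongr
        exact h.const_nonneg

lemma exists_bound_forward_iff (h : NuDWith μ Ψ P K α β θ ν) (hμ : GrowthRate μ)
    (hΨ : IsCocycle Ψ) (x : EuclideanSpace ℝ (Fin n)) :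
    (∃ C, ∀ t, 0 ≤ t → ‖Ψ t 0 x‖ ≤ C) ↔ P 0 x = x := by
  refine ⟨fun ⟨C, hC⟩ => ?_, fun hx => ⟨K * ‖x‖, fun t ht => by
    simpa only [hx] using h.norm_apply_proj_le_of_nonneg hμ ht x⟩⟩
  obtain ⟨-, -, -, -, -, -, -, -, hβν, -⟩ := id h
  have hw : P 0 (x - P 0 x) = 0 := by rw [map_sub, h.proj_apply_proj, sub_self]
  have hgrowth : ∀ t, 0 ≤ t → ‖x - P 0 x‖ ≤ K * μ t ^ (-(β - ν)) * (C + K * ‖x‖) := by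
    intro t ht
    have hsplit : ‖Ψ t 0 (x - P 0 x)‖ ≤ C + K * ‖x‖ := by
      rw [map_sub]
      exact (norm_sub_le _ _).trans
        (add_le_add (hC t ht) (h.norm_apply_proj_le_of_nonneg hμ ht x))
    exact (h.norm_le_of_proj_eq_zero hμ hΨ ht hw).trans <| mul_le_mul_of_nonneg_left hsplit <|
      mul_nonneg h.const_nonneg (Real.rpow_nonneg (hμ.pos t).le _)
  have hzero := eq_zero_of_norm_le_of_tendsto
    (by simpa using (hμ.tendsto_rpow_atTop hβν).const_mul K) ((eventually_ge_atTop 0).mono hgrowth)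
  exact (sub_eq_zero.1 hzero).symm

lemma exists_bound_backward_iff (h : NuDWith μ Ψ P K α β θ ν) (hμ : GrowthRate μ)
    (hΨ : IsCocycle Ψ) (x : EuclideanSpace ℝ (Fin n)) :
    (∃ C, ∀ t, t ≤ 0 → ‖Ψ t 0 x‖ ≤ C) ↔ P 0 x = 0 := by
  refine ⟨fun ⟨C, hC⟩ => ?_, fun hx => ⟨K * ‖x‖, fun t ht => by
    simpa only [hx, sub_zero] using h.norm_apply_sub_proj_le_of_nonpos hμ ht x⟩⟩
  obtain ⟨-, -, -, -, -, -, -, hαθ, -⟩ := id h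
  have hgrowth : ∀ t, t ≤ 0 → ‖P 0 x‖ ≤ K * μ t ^ (-(α + θ)) * (C + K * ‖x‖) := by
    intro t ht
    have hsplit : ‖Ψ t 0 (P 0 x)‖ ≤ C + K * ‖x‖ := by
      rw [← sub_sub_cancel x (P 0 x), map_sub]
      exact (norm_sub_le _ _).trans
        (add_le_add (hC t ht) (h.norm_apply_sub_proj_le_of_nonpos hμ ht x))
    exact (h.norm_le_of_proj_eq_self hμ hΨ ht (h.proj_apply_proj 0 x)).trans <|
      mul_le_mul_of_nonneg_left hsplit <|
        mul_nonneg h.const_nonneg (Real.rpow_nonneg (hμ.pos t).le _)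
  exact eq_zero_of_norm_le_of_tendsto
    (by simpa using (hμ.tendsto_rpow_atBot (neg_pos.2 hαθ)).const_mul K)
    ((eventually_le_atBot 0).mono hgrowth)

lemma uset_zero (h : NuDWith μ Ψ P K α β θ ν) (hμ : GrowthRate μ) (hΨ : IsCocycle Ψ) :
    Uset μ Ψ 0 = {p | P p.1 p.2 = p.2} := by
  ext ⟨s, ξ⟩
  change (∃ C, ∀ t, 0 ≤ t → ‖Ψ t s ξ‖ * μ t ^ (-0 : ℝ) ≤ C) ↔ P s ξ = ξ
  rw [← (hΨ.injective 0 s).eq_iff, ← h.proj_apply_evo, ← h.exists_bound_forward_iff hμ hΨ]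
  simp only [neg_zero, Real.rpow_zero, mul_one, hΨ.apply_apply]

lemma vset_zero (h : NuDWith μ Ψ P K α β θ ν) (hμ : GrowthRate μ) (hΨ : IsCocycle Ψ) :
    Vset μ Ψ 0 = {p | P p.1 p.2 = 0} := by
  ext ⟨s, ξ⟩
  change (∃ C, ∀ t, t ≤ 0 → ‖Ψ t s ξ‖ * μ t ^ (-0 : ℝ) ≤ C) ↔ P s ξ = 0
  rw [← map_eq_zero_iff _ (hΨ.injective 0 s), ← h.proj_apply_evo,
    ← h.exists_bound_backward_iff hμ hΨ]
  simp only [neg_zero, Real.rpow_zero, mul_one, hΨ.apply_apply]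

end NuDWith

section Resolvent

variable {n : ℕ} {μ : ℝ → ℝ} {Φ : ℝ → ℝ → Op n}

lemma uset_vset_eq_of_nuDWith (hμ : GrowthRate μ) (hΦ : IsCocycle Φ) {ζ δ : ℝ}
    {P : ℝ → Op n} {K α β θ ν : ℝ} (h : NuDWith μ (shiftEvo μ ζ Φ) P K α β θ ν)
    (hαδ : α + θ < δ) (hδβ : δ < β - ν) :
    Uset μ Φ (ζ + δ) = {p | P p.1 p.2 = p.2} ∧ Vset μ Φ (ζ + δ) = {p | P p.1 p.2 = 0} := by
  have h' := h.shiftEvo hμ.pos hαδ hδβ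
  have hΨ := (hΦ.shiftEvo hμ.pos ζ).shiftEvo hμ.pos δ
  simpa only [uset_shiftEvo hμ.pos, vset_shiftEvo hμ.pos, add_zero] using
    And.intro (h'.uset_zero hμ hΨ) (h'.vset_zero hμ hΨ)

lemma eventually_uset_vset_eq (hμ : GrowthRate μ) (hΦ : IsCocycle Φ) {ζ : ℝ}
    (hζ : ζ ∈ resolventND μ Φ) :
    ∀ᶠ η in 𝓝 ζ, Uset μ Φ η = Uset μ Φ ζ ∧ Vset μ Φ η = Vset μ Φ ζ := by
  obtain ⟨P, K, α, β, θ, ν, h⟩ := hζ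
  obtain ⟨-, -, -, -, -, -, -, hαθ, hβν, -⟩ := id h
  filter_upwards [Ioo_mem_nhds (by linarith : ζ + (α + θ) < ζ) (by linarith : ζ < ζ + (β - ν))]
    with η hη
  obtain ⟨hU, hV⟩ := uset_vset_eq_of_nuDWith hμ hΦ h (δ := η - ζ)
    (by linarith [hη.1]) (by linarith [hη.2])
  obtain ⟨hU₀, hV₀⟩ := uset_vset_eq_of_nuDWith hμ hΦ h (δ := 0) hαθ hβν
  rw [add_sub_cancel] at hU hV
  rw [add_zero] at hU₀ hV₀
  exact ⟨hU.trans hU₀.symm, hV.trans hV₀.symm⟩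

end Resolvent

theorem stmt8_general (n : ℕ) (A : ℝ → Op n)
    (Φ : ℝ → ℝ → Op n) (hΦ : IsEvolutionOp A Φ)
    (μ : ℝ → ℝ) (hgr : GrowthRate μ)
    (J : Set ℝ) (hJ : J.OrdConnected) (hJρ : J ⊆ resolventND μ Φ)
    (γ : ℝ) (hγ : γ ∈ J) :
    ∀ η ∈ J, Uset μ Φ η = Uset μ Φ γ ∧ Vset μ Φ η = Vset μ Φ γ := by
  intro η hη
  refine hJ.isPreconnected.induction₂'
    (fun x y => Uset μ Φ x = Uset μ Φ y ∧ Vset μ Φ x = Vset μ Φ y) (fun ζ hζ => ?_)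
    (fun x y z _ _ _ hxy hyz => ⟨hxy.1.trans hyz.1, hxy.2.trans hyz.2⟩) hη hγ
  filter_upwards [nhdsWithin_le_nhds (eventually_uset_vset_eq hgr hΦ.isCocycle (hJρ hζ))]
    with ξ hξ
  exact ⟨⟨hξ.1.symm, hξ.2.symm⟩, hξ⟩

/-- constancy of U and V over an interval of the resolvent set. -/
theorem stmt8 (n : ℕ) (A : ℝ → Op n) (hA : Continuous A)
    (Φ : ℝ → ℝ → Op n) (hΦ : IsEvolutionOp A Φ)
    (μ : ℝ → ℝ) (hgr : GrowthRate μ) (hdiff : Differentiable ℝ μ)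
    (J : Set ℝ) (hJ : J.OrdConnected) (hJρ : J ⊆ resolventND μ Φ)
    (γ : ℝ) (hγ : γ ∈ J) :
    ∀ η ∈ J, Uset μ Φ η = Uset μ Φ γ ∧ Vset μ Φ η = Vset μ Φ γ :=
  stmt8_general n A Φ hΦ μ hgr J hJ hJρ γ hγ
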